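/- arXiv:2309.16911 — 2 statements merged into one kernel-verified Lean document; each statement's English description precedes it below -/
import Mathlib

section
/- Let f be monotone, subadditive with f(∅)=0, and let X₁, X₂ ⊆ F. For any s ≥ 1 and any ε > 0 and any real times t₀ ≤ t₁ ≤ ⋯ ≤ t_{2s}, define ALGcost = s(f(X₁)+f(X₂)) + Σ_{k=1}^s [|X₁|(t_{2k−1}−t_{2k−2}) + |X₂|(t_{2k}−t_{2k−1})] − (|X₁|+|X₂|)·s·ε, ODDcost = f(X₁)+f(X₂)+(s−1)f(X₁∪X₂)+Σ_{k=1}^s |X₂|(t_{2k}−t_{2k−1}), EVENcost = s·f(X₁∪X₂)+Σ_{k=1}^s |X₁|(t_{2k−1}−t_{2k−2}). Then, letting ε → 0, ALGcost / ((ODDcost+EVENcost)/2) ≥ 2(f(X₁)+f(X₂)) / (2f(X₁∪X₂) + (f(X₁)+f(X₂)−f(X₁∪X₂))/s), provided f(X₁)+f(X₂) ≤ f(X₁∪X₂)·2 and all quantities are positive. -/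
/-!
Write `A = f X₁ + f X₂`, `B = f (X₁ ∪ X₂)`, `D = A + (2s - 1)B` and let `T ≥ 0` be the total
processing-time term. Then `ALGcost 0 = sA + T` and `ODDcost + EVENcost = D + T`, while the
claimed bound equals `2sA / D`. Since `A ≤ 2B` gives `sA ≤ D`, adding `T` to numerator and
denominator of `sA / D` can only increase it.
-/

theorem div_le_add_div_add {a b c : ℝ} (hb : 0 < b) (hc : 0 ≤ c) (hab : a ≤ b) :
    a / b ≤ (a + c) / (b + c) := by
  rw [div_le_div_iff₀ hb (by positivity)]
  nlinarith

theorem mul_le_add_mul_of_le_two_mul {A B s : ℝ} (hB : 0 ≤ B) (hs : 1 ≤ s) (hle : A ≤ 2 * B) :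
    s * A ≤ A + (2 * s - 1) * B := by
  nlinarith

theorem ratio_le_of_le_two_mul {A B T s : ℝ} (hA : 0 ≤ A) (hB : 0 < B) (hs : 1 ≤ s)
    (hT : 0 ≤ T) (hle : A ≤ 2 * B) :
    2 * A / (2 * B + (A - B) / s) ≤ (s * A + T) / ((A + (2 * s - 1) * B + T) / 2) := by
  have hD : 0 < A + (2 * s - 1) * B := by nlinarith
  have hlhs : 2 * A / (2 * B + (A - B) / s) = 2 * (s * A / (A + (2 * s - 1) * B)) := by
    field_simp
    ring
  have hrhs : (s * A + T) / ((A + (2 * s - 1) * B + T) / 2) =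
      2 * ((s * A + T) / (A + (2 * s - 1) * B + T)) := by
    rw [div_div_eq_mul_div, mul_comm, mul_div_assoc]
  rw [hlhs, hrhs]
  gcongr 2 * ?_
  exact div_le_add_div_add hD hT (mul_le_add_mul_of_le_two_mul hB.le hs hle)

theorem sum_card_mul_sub_nonneg {F : Type*} (X : Finset F) {t : ℕ → ℝ} (ht : Monotone t)
    (I : Finset ℕ) (m n : ℕ → ℕ) (hmn : ∀ k ∈ I, m k ≤ n k) :
    0 ≤ ∑ k ∈ I, (X.card : ℝ) * (t (n k) - t (m k)) :=
  Finset.sum_nonneg fun k hk => mul_nonneg (Nat.cast_nonneg _) (sub_nonneg.2 (ht (hmn k hk)))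

theorem stmt_13_general {F : Type*} [DecidableEq F]
    (f : Finset F → ℝ)
    (hnn : ∀ X, 0 ≤ f X)
    (X₁ X₂ : Finset F)
    (s : ℕ) (hs : 1 ≤ s)
    (t : ℕ → ℝ) (ht : Monotone t)
    (hle : f X₁ + f X₂ ≤ 2 * f (X₁ ∪ X₂))
    (hXpos : 0 < f (X₁ ∪ X₂)) :
    let ALGcost : ℝ → ℝ := fun ε =>
      (s : ℝ) * (f X₁ + f X₂) +
        (∑ k ∈ Finset.Icc 1 s,
          ((X₁.card : ℝ) * (t (2 * k - 1) - t (2 * k - 2)) +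
           (X₂.card : ℝ) * (t (2 * k) - t (2 * k - 1)))) -
        ((X₁.card : ℝ) + (X₂.card : ℝ)) * (s : ℝ) * ε
    let ODDcost : ℝ :=
      f X₁ + f X₂ + ((s : ℝ) - 1) * f (X₁ ∪ X₂) +
        ∑ k ∈ Finset.Icc 1 s, (X₂.card : ℝ) * (t (2 * k) - t (2 * k - 1))
    let EVENcost : ℝ :=
      (s : ℝ) * f (X₁ ∪ X₂) +
        ∑ k ∈ Finset.Icc 1 s, (X₁.card : ℝ) * (t (2 * k - 1) - t (2 * k - 2))
    Filter.Tendsto (fun ε => ALGcost ε / ((ODDcost + EVENcost) / 2)) (nhds 0)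
        (nhds (ALGcost 0 / ((ODDcost + EVENcost) / 2))) ∧
    2 * (f X₁ + f X₂) /
        (2 * f (X₁ ∪ X₂) + (f X₁ + f X₂ - f (X₁ ∪ X₂)) / (s : ℝ)) ≤
      ALGcost 0 / ((ODDcost + EVENcost) / 2) := by
  intro ALGcost ODDcost EVENcost
  refine ⟨(Continuous.tendsto (by fun_prop) 0).div_const _, ?_⟩
  set T₁ := ∑ k ∈ Finset.Icc 1 s, (X₁.card : ℝ) * (t (2 * k - 1) - t (2 * k - 2))
  set T₂ := ∑ k ∈ Finset.Icc 1 s, (X₂.card : ℝ) * (t (2 * k) - t (2 * k - 1))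
  have hT₁ : 0 ≤ T₁ := sum_card_mul_sub_nonneg X₁ ht _ _ _ fun k _ => by omega
  have hT₂ : 0 ≤ T₂ := sum_card_mul_sub_nonneg X₂ ht _ _ _ fun k _ => by omega
  have hALG : ALGcost 0 = s * (f X₁ + f X₂) + (T₁ + T₂) := by
    simp only [ALGcost, T₁, T₂, Finset.sum_add_distrib]
    ring
  have hOPT : ODDcost + EVENcost =
      f X₁ + f X₂ + (2 * s - 1) * f (X₁ ∪ X₂) + (T₁ + T₂) := by
    simp only [ODDcost, EVENcost]
    ring
  rw [hALG, hOPT]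
  exact ratio_le_of_le_two_mul (add_nonneg (hnn _) (hnn _)) hXpos (by exact_mod_cast hs)
    (add_nonneg hT₁ hT₂) hle

/-- The adversarial lower-bound computation. With the costs of the
online algorithm and the "odd"/"even" offline schedules defined as in the proof of
Theorem 4, as `ε → 0` the ratio `ALGcost / ((ODDcost + EVENcost)/2)` is at least
`2(f X₁ + f X₂) / (2 f(X₁∪X₂) + (f X₁ + f X₂ − f(X₁∪X₂))/s)`. -/
theorem stmt_13 {F : Type*} [Fintype F] [DecidableEq F]
    (f : Finset F → ℝ)
    (hnn : ∀ X, 0 ≤ f X)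
    (h0 : f ∅ = 0)
    (hmono : ∀ X Y : Finset F, Y ⊆ X → f Y ≤ f X)
    (hsub : ∀ X Y : Finset F, f (X ∪ Y) ≤ f X + f Y)
    (X₁ X₂ : Finset F)
    (s : ℕ) (hs : 1 ≤ s)
    (t : ℕ → ℝ) (ht : Monotone t)
    (hle : f X₁ + f X₂ ≤ 2 * f (X₁ ∪ X₂))
    (hXpos : 0 < f (X₁ ∪ X₂)) :
    let ALGcost : ℝ → ℝ := fun ε =>
      (s : ℝ) * (f X₁ + f X₂) +
        (∑ k ∈ Finset.Icc 1 s,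
          ((X₁.card : ℝ) * (t (2 * k - 1) - t (2 * k - 2)) +
           (X₂.card : ℝ) * (t (2 * k) - t (2 * k - 1)))) -
        ((X₁.card : ℝ) + (X₂.card : ℝ)) * (s : ℝ) * ε
    let ODDcost : ℝ :=
      f X₁ + f X₂ + ((s : ℝ) - 1) * f (X₁ ∪ X₂) +
        ∑ k ∈ Finset.Icc 1 s, (X₂.card : ℝ) * (t (2 * k) - t (2 * k - 1))
    let EVENcost : ℝ :=
      (s : ℝ) * f (X₁ ∪ X₂) +
        ∑ k ∈ Finset.Icc 1 s, (X₁.card : ℝ) * (t (2 * k - 1) - t (2 * k - 2))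
    Filter.Tendsto (fun ε => ALGcost ε / ((ODDcost + EVENcost) / 2)) (nhds 0)
        (nhds (ALGcost 0 / ((ODDcost + EVENcost) / 2))) ∧
    2 * (f X₁ + f X₂) /
        (2 * f (X₁ ∪ X₂) + (f X₁ + f X₂ - f (X₁ ∪ X₂)) / (s : ℝ)) ≤
      ALGcost 0 / ((ODDcost + EVENcost) / 2) :=
  stmt_13_general f hnn X₁ X₂ s hs t ht hle hXpos
end

section
/- Let f be monotone subadditive with f(∅)=0 and curvature Γ > 0. For any sets B̃, L_prev, L with f(B̃ ∪ L_prev) ≤ S (where S ≥ 0), one has f(B̃ ∪ L) ≤ S/Γ + f(L) − f(L_prev). -/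
/-- The ratios `f (X ∪ Y) / (f X + f Y)` whose infimum is the curvature of `f`. -/
def unionRatios {F : Type*} [DecidableEq F] (f : Finset F → ℝ) : Set ℝ :=
  {r | ∃ X Y : Finset F, 0 < f X + f Y ∧ r = f (X ∪ Y) / (f X + f Y)}

section Curvature

variable {F : Type*} [DecidableEq F] {f : Finset F → ℝ}

lemma bddBelow_unionRatios (hnn : ∀ X, 0 ≤ f X) : BddBelow (unionRatios f) := by
  refine ⟨0, ?_⟩
  rintro r ⟨X, Y, hXY, rfl⟩
  exact div_nonneg (hnn _) hXY.le

lemma sInf_unionRatios_mul_le (hnn : ∀ X, 0 ≤ f X) (X Y : Finset F) :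
    sInf (unionRatios f) * (f X + f Y) ≤ f (X ∪ Y) := by
  rcases (add_nonneg (hnn X) (hnn Y)).eq_or_lt with hzero | hpos
  · rw [← hzero, mul_zero]
    exact hnn _
  · have hle : sInf (unionRatios f) ≤ f (X ∪ Y) / (f X + f Y) :=
      csInf_le (bddBelow_unionRatios hnn) ⟨X, Y, hpos, rfl⟩
    exact (le_div_iff₀ hpos).mp hle

lemma add_le_div_sInf_unionRatios (hnn : ∀ X, 0 ≤ f X) (hΓ : 0 < sInf (unionRatios f))
    (X Y : Finset F) : f X + f Y ≤ f (X ∪ Y) / sInf (unionRatios f) := by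
  rw [le_div_iff₀ hΓ, mul_comm]
  exact sInf_unionRatios_mul_le hnn X Y

end Curvature

theorem stmt_18_general {F : Type*} [DecidableEq F]
    (f : Finset F → ℝ)
    (hnn : ∀ X, 0 ≤ f X)
    (hsub : ∀ X Y : Finset F, f (X ∪ Y) ≤ f X + f Y)
    (Γ : ℝ)
    (hΓdef : Γ = sInf {r : ℝ | ∃ X Y : Finset F, 0 < f X + f Y ∧ r = f (X ∪ Y) / (f X + f Y)})
    (hΓpos : 0 < Γ)
    (B L Lprev : Finset F) (S : ℝ)
    (hbound : f (B ∪ Lprev) ≤ S) :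
    f (B ∪ L) ≤ S / Γ + f L - f Lprev := by
  change Γ = sInf (unionRatios f) at hΓdef
  subst hΓdef
  have hcurv := add_le_div_sInf_unionRatios hnn hΓpos B Lprev
  have hS : f (B ∪ Lprev) / sInf (unionRatios f) ≤ S / sInf (unionRatios f) :=
    div_le_div_of_nonneg_right hbound hΓpos.le
  linarith [hsub B L]

/-- For `f` monotone, subadditive with `f ∅ = 0` and curvature
`Γ > 0`, and any sets `B̃, Lprev, L` with `f (B̃ ∪ Lprev) ≤ S` (`S ≥ 0`), one has
`f (B̃ ∪ L) ≤ S/Γ + f L − f Lprev`. -/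
theorem stmt_18 {F : Type*} [Fintype F] [DecidableEq F]
    (f : Finset F → ℝ)
    (hnn : ∀ X, 0 ≤ f X)
    (h0 : f ∅ = 0)
    (hmono : ∀ X Y : Finset F, Y ⊆ X → f Y ≤ f X)
    (hsub : ∀ X Y : Finset F, f (X ∪ Y) ≤ f X + f Y)
    (Γ : ℝ)
    (hΓdef : Γ = sInf {r : ℝ | ∃ X Y : Finset F, 0 < f X + f Y ∧ r = f (X ∪ Y) / (f X + f Y)})
    (hΓpos : 0 < Γ)
    (B L Lprev : Finset F) (S : ℝ) (hS : 0 ≤ S)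
    (hbound : f (B ∪ Lprev) ≤ S) :
    f (B ∪ L) ≤ S / Γ + f L - f Lprev :=
  stmt_18_general f hnn hsub Γ hΓdef hΓpos B L Lprev S hbound
end
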